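/- arXiv:2405.01013 — 8 statements merged into one kernel-verified Lean document; each statement's English description precedes it below -/
import Mathlib

section
/- Let φ : [0,∞) → (0,∞) be continuous and non-decreasing, let 0 < x ≤ T < ∞, and let v : [0,T] → [0,∞) be non-decreasing and 1-Lipschitz with v(0) = 0 and v(T) ≥ x. Then ∫_0^T dt/φ(t − v(t)) ≥ G_φ(x,T), where G_φ(x,T) = ∫_0^{T−x} dt/φ(t) + x/φ(T−x). -/
/-!
Since `v` is 1-Lipschitz, `t ↦ t - v t` is non-decreasing, so on `[0, T]` it lies between
`0 = 0 - v 0` and `T - v T ≤ T - x`; as `v ≥ 0` it is also at most `t`. Hence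
`t - v t ≤ min t (T - x) = t - v* t` for the optimal schedule `v*`, and since `1 / φ` is
non-increasing, `1 / φ (t - v t) ≥ 1 / φ (min t (T - x))`. Integrating the right-hand side over
`[0, T]` gives exactly `G_φ(x, T)`.
-/

open Set intervalIntegral MeasureTheory

theorem LipschitzOnWith.sub_le_sub_of_le {v : ℝ → ℝ} {s : Set ℝ} (hv : LipschitzOnWith 1 v s)
    {a b : ℝ} (ha : a ∈ s) (hb : b ∈ s) (hab : a ≤ b) : v b - v a ≤ b - a := by
  have h := hv.dist_le_mul b hb a ha
  rw [NNReal.coe_one, one_mul, Real.dist_eq, Real.dist_eq, abs_of_nonneg (sub_nonneg.2 hab)] at h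
  exact (le_abs_self _).trans h

theorem LipschitzOnWith.monotoneOn_id_sub {v : ℝ → ℝ} {s : Set ℝ} (hv : LipschitzOnWith 1 v s) :
    MonotoneOn (fun t => t - v t) s := fun a ha b hb hab => by
  linarith [hv.sub_le_sub_of_le ha hb hab]

theorem MonotoneOn.antitoneOn_one_div {φ : ℝ → ℝ} {s : Set ℝ} (hφ : MonotoneOn φ s)
    (hpos : ∀ t ∈ s, 0 < φ t) : AntitoneOn (fun t => 1 / φ t) s := fun _ ha _ hb hab =>
  one_div_le_one_div_of_le (hpos _ ha) (hφ ha hb hab)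

theorem intervalIntegral.integral_comp_min_const {E : Type*} [NormedAddCommGroup E]
    [NormedSpace ℝ E] [CompleteSpace E] {f : ℝ → E} {a b c : ℝ} (hac : a ≤ c) (hcb : c ≤ b)
    (hf : IntervalIntegrable f volume a c) :
    ∫ t in a..b, f (min t c) = (∫ t in a..c, f t) + (b - c) • f c := by
  have h_left : EqOn (fun t => f (min t c)) f (uIcc a c) := fun t ht => by
    rw [uIcc_of_le hac] at ht
    simp only [min_eq_left ht.2]
  have h_right : EqOn (fun t => f (min t c)) (fun _ => f c) (uIcc c b) := fun t ht => by
    rw [uIcc_of_le hcb] at ht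
    simp only [min_eq_right ht.1]
  have hf_left : IntervalIntegrable (fun t => f (min t c)) volume a c :=
    hf.congr fun t ht => (h_left (uIoc_subset_uIcc ht)).symm
  have hf_right : IntervalIntegrable (fun t => f (min t c)) volume c b :=
    (intervalIntegrable_const (c := f c)).congr fun t ht => (h_right (uIoc_subset_uIcc ht)).symm
  rw [← integral_add_adjacent_intervals hf_left hf_right, integral_congr h_left,
    integral_congr h_right, integral_const]

theorem stmt_5_general (φ : ℝ → ℝ)
    (hpos : ∀ t, 0 ≤ t → 0 < φ t)
    (hmono : MonotoneOn φ (Set.Ici 0))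
    (x T : ℝ) (hx : 0 < x) (hxT : x ≤ T)
    (v : ℝ → ℝ)
    (hvnonneg : ∀ t ∈ Set.Icc (0 : ℝ) T, 0 ≤ v t)
    (hvlip : LipschitzOnWith 1 v (Set.Icc (0 : ℝ) T))
    (hv0 : v 0 = 0) (hvT : x ≤ v T) :
    (∫ t in (0 : ℝ)..(T - x), 1 / φ t) + x / φ (T - x)
      ≤ ∫ t in (0 : ℝ)..T, 1 / φ (t - v t) := by
  have hT : 0 ≤ T := hx.le.trans hxT
  have hTx : 0 ≤ T - x := sub_nonneg.2 hxT
  have hI : uIcc 0 T = Icc 0 T := uIcc_of_le hT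
  have h_inv : AntitoneOn (fun t => 1 / φ t) (Ici 0) := hmono.antitoneOn_one_div hpos
  have h_lag : MonotoneOn (fun t => t - v t) (uIcc 0 T) := hI ▸ hvlip.monotoneOn_id_sub
  have h_lag_nonneg : MapsTo (fun t => t - v t) (uIcc 0 T) (Ici 0) := fun t ht => by
    simpa [hv0] using h_lag left_mem_uIcc ht (hI ▸ ht).1
  have h_lag_le : ∀ t ∈ Icc 0 T, t - v t ≤ min t (T - x) := fun t ht =>
    le_min (by linarith [hvnonneg t ht])
      (by linarith [h_lag (hI ▸ ht) right_mem_uIcc ht.2])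
  have h_opt_nonneg : MapsTo (fun t => min t (T - x)) (uIcc 0 T) (Ici 0) := fun t ht =>
    le_min (hI ▸ ht).1 hTx
  calc (∫ t in (0 : ℝ)..(T - x), 1 / φ t) + x / φ (T - x)
      = ∫ t in (0 : ℝ)..T, 1 / φ (min t (T - x)) := by
        have h_int : IntervalIntegrable (fun t => 1 / φ t) volume 0 (T - x) :=
          (h_inv.mono fun t ht => (uIcc_of_le hTx ▸ ht).1).intervalIntegrable
        rw [integral_comp_min_const hTx (by linarith) h_int, smul_eq_mul, sub_sub_cancel,
          mul_one_div]
    _ ≤ ∫ t in (0 : ℝ)..T, 1 / φ (t - v t) :=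
        integral_mono_on hT
          (h_inv.comp_MonotoneOn (fun _ _ _ _ hab => min_le_min_right _ hab)
            h_opt_nonneg).intervalIntegrable
          (h_inv.comp_MonotoneOn h_lag h_lag_nonneg).intervalIntegrable
          fun t ht => h_inv (h_lag_nonneg (hI ▸ ht)) (h_opt_nonneg (hI ▸ ht)) (h_lag_le t ht)

/-- Variational lower bound from Lemma A.3: for φ continuous, positive and
non-decreasing on [0,∞), 0 < x ≤ T, and v : [0,T] → [0,∞) non-decreasing,
1-Lipschitz, with v(0) = 0 and v(T) ≥ x, one has
∫_0^T dt/φ(t − v(t)) ≥ G_φ(x,T) = ∫_0^{T−x} dt/φ(t) + x/φ(T−x). -/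
theorem stmt_5 (φ : ℝ → ℝ)
    (hcont : ContinuousOn φ (Set.Ici 0))
    (hpos : ∀ t, 0 ≤ t → 0 < φ t)
    (hmono : MonotoneOn φ (Set.Ici 0))
    (x T : ℝ) (hx : 0 < x) (hxT : x ≤ T)
    (v : ℝ → ℝ)
    (hvnonneg : ∀ t ∈ Set.Icc (0 : ℝ) T, 0 ≤ v t)
    (hvmono : MonotoneOn v (Set.Icc (0 : ℝ) T))
    (hvlip : LipschitzOnWith 1 v (Set.Icc (0 : ℝ) T))
    (hv0 : v 0 = 0) (hvT : x ≤ v T) :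
    (∫ t in (0 : ℝ)..(T - x), 1 / φ t) + x / φ (T - x)
      ≤ ∫ t in (0 : ℝ)..T, 1 / φ (t - v t) :=
  stmt_5_general φ hpos hmono x T hx hxT v hvnonneg hvlip hv0 hvT
end

section
/- For every real x ≥ 0, the infimum over T ∈ [x, ∞) of ( ∫_0^{T−x} e^{−t} dt + x·e^{−(T−x)} ) equals min(x, 1). -/
/-- Key calculation of Corollary 2.2: for x ≥ 0,
inf_{T ≥ x} ( ∫_0^{T−x} e^{−t} dt + x·e^{−(T−x)} ) = min(x, 1). -/
theorem stmt_6 (x : ℝ) (hx : 0 ≤ x) :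
    sInf ((fun T : ℝ =>
        (∫ t in (0 : ℝ)..(T - x), Real.exp (-t)) + x * Real.exp (-(T - x))) '' Set.Ici x)
      = min x 1 := by
  set f : ℝ → ℝ := fun T =>
    (∫ t in (0 : ℝ)..(T - x), Real.exp (-t)) + x * Real.exp (-(T - x)) with hf
  have key : ∀ T : ℝ, f T = 1 + (x - 1) * Real.exp (-(T - x)) := by
    intro T
    rw [hf]
    simp only
    rw [intervalIntegral.integral_comp_neg (fun t => Real.exp t), integral_exp]
    simp
    ring
  have hne : (f '' Set.Ici x).Nonempty := ⟨f x, Set.mem_image_of_mem f (le_refl x)⟩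
  have hlb : ∀ y ∈ f '' Set.Ici x, min x 1 ≤ y := by
    rintro y ⟨T, hT, rfl⟩
    rw [key]
    have hTx : (0:ℝ) ≤ T - x := by simpa using sub_nonneg.mpr (Set.mem_Ici.mp hT)
    have he1 : Real.exp (-(T - x)) ≤ 1 := Real.exp_le_one_iff.mpr (by linarith)
    have he0 : 0 < Real.exp (-(T - x)) := Real.exp_pos _
    rcases min_cases x 1 with ⟨hm, hx1⟩ | ⟨hm, hx1⟩ <;> rw [hm] <;> nlinarith
  have hbdd : BddBelow (f '' Set.Ici x) := ⟨min x 1, hlb⟩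
  refine le_antisymm ?_ (le_csInf hne hlb)
  rcases le_or_gt x 1 with hx1 | hx1
  · have hfx : f x = x := by rw [key]; simp
    rw [min_eq_left hx1]
    calc sInf (f '' Set.Ici x) ≤ f x := csInf_le hbdd (Set.mem_image_of_mem f (le_refl x))
    _ = x := hfx
  · rw [min_eq_right hx1.le]
    rw [Real.sInf_le_iff hbdd hne]
    intro ε hε
    set s0 : ℝ := max 0 (Real.log ((x - 1) / ε) + 1) with hs0def
    have hs0 : 0 ≤ s0 := le_max_left _ _
    have hxm : 0 < x - 1 := by linarith
    have hlog : Real.log ((x - 1) / ε) < s0 :=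
      lt_of_lt_of_le (by linarith) (le_max_right _ _)
    have hlt : Real.exp (-s0) < ε / (x - 1) := by
      have h2 : Real.exp (-s0) < Real.exp (-Real.log ((x - 1) / ε)) :=
        Real.exp_lt_exp.mpr (by linarith)
      rwa [Real.exp_neg (Real.log ((x - 1) / ε)), Real.exp_log (by positivity), inv_div] at h2
    refine ⟨f (x + s0), Set.mem_image_of_mem f (by simp [hs0]), ?_⟩
    rw [key]
    have : (x - 1) * Real.exp (-(x + s0 - x)) < (x - 1) * (ε / (x - 1)) := by
      apply mul_lt_mul_of_pos_left _ hxm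
      simpa using hlt
    have heq : (x - 1) * (ε / (x - 1)) = ε := by field_simp
    linarith [this, heq ▸ this]
end

section
/- Let r ∈ (1/2, 1) and for 0 < x ≤ T set G_r(x,T) = ∫_0^{T−x} dt/(1+t)^r + x/(1+T−x)^r. Then for every x > 0: if x ≤ 1/r, the infimum over T ∈ [x,∞) of G_r(x,T) equals x; and if x ≥ 1/r, it equals −1/(1−r) + (r x)^{1−r}/(r(1−r)). -/
private lemma int_eq_aux (r : ℝ) (hr1 : r < 1) (s : ℝ) (hs : 0 ≤ s) :
    (∫ t in (0:ℝ)..s, 1 / (1 + t) ^ r) = ((1+s)^(1-r) - 1)/(1-r) := by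
  have h1 : (∫ t in (0:ℝ)..s, 1 / (1 + t) ^ r) = ∫ t in (0:ℝ)..s, (1 + t) ^ (-r) := by
    apply intervalIntegral.integral_congr
    intro t ht
    rw [Set.uIcc_of_le hs] at ht
    have h : (0:ℝ) < 1 + t := by have := ht.1; linarith
    simp only [Real.rpow_neg h.le, one_div]
  have h2 : (∫ t in (0:ℝ)..s, (1 + t) ^ (-r)) = ∫ t in (1:ℝ)..(1+s), t ^ (-r) := by
    have := intervalIntegral.integral_comp_add_left (a:=0) (b:=s) (fun t : ℝ => t ^ (-r)) 1
    simpa using this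
  rw [h1, h2, integral_rpow (Or.inl (by linarith))]
  rw [Real.one_rpow]
  have : -r + 1 = 1 - r := by ring
  rw [this]

private lemma deriv_aux (r x : ℝ) (hr1 : r < 1) (u : ℝ) (hu : 0 < u) :
    HasDerivAt (fun u : ℝ => (u ^ (1-r) - 1)/(1-r) + x * u ^ (-r)) (u ^ (-r-1) * (u - r * x)) u := by
  have h1 : HasDerivAt (fun u : ℝ => u ^ (1-r)) ((1-r) * u ^ (1-r-1)) u :=
    Real.hasDerivAt_rpow_const (Or.inl hu.ne')
  have h2 : HasDerivAt (fun u : ℝ => u ^ (-r)) ((-r) * u ^ (-r-1)) u :=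
    Real.hasDerivAt_rpow_const (Or.inl hu.ne')
  have h := ((h1.sub_const 1).div_const (1-r)).add (h2.const_mul x)
  refine HasDerivAt.congr_deriv h (Eq.symm ?_)
  have e1 : (1:ℝ)-r-1 = -r := by ring
  rw [e1]
  have e2 : u ^ (-r-1) * u = u ^ (-r) := by
    rw [← Real.rpow_add_one hu.ne']; norm_num
  have hne : (1:ℝ)-r ≠ 0 := by intro h; linarith
  rw [← e2]; field_simp; ring

/-- Key step of Corollary 2.3: for r ∈ (1/2,1), φ(t) = (1+t)^r and
G_r(x,T) = ∫_0^{T−x} dt/(1+t)^r + x/(1+T−x)^r, the infimum of G_r(x,·) over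
[x,∞) equals x when x ≤ 1/r, and equals −1/(1−r) + (rx)^{1−r}/(r(1−r)) when
x ≥ 1/r. -/
theorem stmt_8 (r : ℝ) (hr : r ∈ Set.Ioo (1 / 2 : ℝ) 1) (x : ℝ) (hx : 0 < x) :
    (x ≤ 1 / r →
      sInf ((fun T : ℝ =>
          (∫ t in (0 : ℝ)..(T - x), 1 / (1 + t) ^ r) + x / (1 + T - x) ^ r) '' Set.Ici x)
        = x)
    ∧ (1 / r ≤ x →
      sInf ((fun T : ℝ =>
          (∫ t in (0 : ℝ)..(T - x), 1 / (1 + t) ^ r) + x / (1 + T - x) ^ r) '' Set.Ici x)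
        = -(1 / (1 - r)) + (r * x) ^ (1 - r) / (r * (1 - r))) := by
  obtain ⟨hrhalf, hr1⟩ := hr
  have hr0 : 0 < r := by linarith
  have h1r : 0 < 1 - r := by linarith
  set F : ℝ → ℝ := fun u => (u ^ (1-r) - 1)/(1-r) + x * u ^ (-r) with hFdef
  set G : ℝ → ℝ := fun T : ℝ =>
      (∫ t in (0 : ℝ)..(T - x), 1 / (1 + t) ^ r) + x / (1 + T - x) ^ r with hGdef
  have hG : ∀ T, x ≤ T → G T = F (1 + (T - x)) := by
    intro T hT
    have hs : 0 ≤ T - x := by linarith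
    have hu : (0:ℝ) < 1 + (T - x) := by linarith
    simp only [hGdef, hFdef]
    rw [int_eq_aux r hr1 _ hs]
    have e : (1 : ℝ) + T - x = 1 + (T - x) := by ring
    rw [e, Real.rpow_neg hu.le]
    ring
  -- monotonicity facts
  have hcont : ∀ c : ℝ, 0 < c → ContinuousOn F (Set.Ici c) := by
    intro c hc u hu
    exact ((deriv_aux r x hr1 u (lt_of_lt_of_le hc hu)).continuousAt).continuousWithinAt
  have hderiv_eq : ∀ u : ℝ, 0 < u → deriv F u = u ^ (-r-1) * (u - r * x) := by
    intro u hu; exact (deriv_aux r x hr1 u hu).deriv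
  have hmono : ∀ c : ℝ, 0 < c → r * x ≤ c → MonotoneOn F (Set.Ici c) := by
    intro c hc hrc
    apply monotoneOn_of_deriv_nonneg (convex_Ici c) (hcont c hc)
    · intro u hu
      rw [interior_Ici] at hu
      exact ((deriv_aux r x hr1 u (hc.trans hu)).differentiableAt).differentiableWithinAt
    · intro u hu
      rw [interior_Ici] at hu
      have hu0 : 0 < u := hc.trans hu
      rw [hderiv_eq u hu0]
      have h1 : (0:ℝ) ≤ u ^ (-r-1) := (Real.rpow_pos_of_pos hu0 _).le
      have hcu : c < u := hu
      have h2 : (0:ℝ) ≤ u - r * x := by linarith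
      exact mul_nonneg h1 h2
  -- value at 1
  have hF1 : F 1 = x := by simp [hFdef]
  constructor
  · -- case x ≤ 1/r
    intro hxr
    have hrx1 : r * x ≤ 1 := by
      have := (le_div_iff₀ hr0).mp hxr
      linarith [mul_comm x r]
    have hmono1 := hmono 1 one_pos hrx1
    have hlb : ∀ y ∈ G '' Set.Ici x, x ≤ y := by
      rintro y ⟨T, hT, rfl⟩
      rw [Set.mem_Ici] at hT
      rw [hG T hT, ← hF1]
      exact hmono1 (by norm_num) (by simp; linarith) (by linarith)
    have hmem : x ∈ G '' Set.Ici x := by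
      refine ⟨x, Set.self_mem_Ici, ?_⟩
      rw [hG x le_rfl]; simpa using hF1
    exact IsLeast.csInf_eq ⟨hmem, hlb⟩
  · -- case 1/r ≤ x
    intro hxr
    have hrx1 : 1 ≤ r * x := by
      have := (div_le_iff₀ hr0).mp hxr
      linarith [mul_comm x r]
    have hrx0 : 0 < r * x := mul_pos hr0 hx
    -- value at r*x
    have key : (r*x) ^ (1-r) = (r*x) * (r*x) ^ (-r) := by
      rw [show (1:ℝ)-r = -r+1 by ring, Real.rpow_add_one hrx0.ne']
      ring
    have hFrx : F (r*x) = -(1 / (1 - r)) + (r * x) ^ (1 - r) / (r * (1 - r)) := by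
      simp only [hFdef]
      rw [key]
      field_simp
      ring
    have hanti : AntitoneOn F (Set.Icc 1 (r*x)) := by
      apply antitoneOn_of_deriv_nonpos (convex_Icc 1 (r*x))
      · exact (hcont 1 one_pos).mono (fun u hu => hu.1)
      · intro u hu
        rw [interior_Icc] at hu
        exact ((deriv_aux r x hr1 u (lt_trans one_pos hu.1)).differentiableAt).differentiableWithinAt
      · intro u hu
        rw [interior_Icc] at hu
        have hu0 : 0 < u := lt_trans one_pos hu.1
        rw [hderiv_eq u hu0]
        have h1 : (0:ℝ) ≤ u ^ (-r-1) := (Real.rpow_pos_of_pos hu0 _).le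
        have h2 : u - r * x ≤ 0 := by linarith [hu.2]
        exact mul_nonpos_of_nonneg_of_nonpos h1 h2
    have hmono2 := hmono (r*x) hrx0 le_rfl
    have hFlb : ∀ u, 1 ≤ u → F (r*x) ≤ F u := by
      intro u hu
      rcases le_total u (r*x) with h | h
      · exact hanti ⟨hu, h⟩ ⟨hrx1, le_rfl⟩ h
      · exact hmono2 Set.self_mem_Ici (Set.mem_Ici.mpr h) h
    have hlb : ∀ y ∈ G '' Set.Ici x, F (r*x) ≤ y := by
      rintro y ⟨T, hT, rfl⟩
      rw [Set.mem_Ici] at hT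
      rw [hG T hT]
      exact hFlb _ (by linarith)
    have hmem : F (r*x) ∈ G '' Set.Ici x := by
      refine ⟨x + (r*x - 1), by simp [Set.mem_Ici]; linarith, ?_⟩
      rw [hG _ (by linarith)]
      congr 1
      ring
    rw [← hFrx]
    exact IsLeast.csInf_eq ⟨hmem, hlb⟩
end

section
/- With W_r = ∫_{1/r}^∞ x^{1−r}/(1+x)^{r+1} dx for r ∈ (1/2, 1), one has liminf_{r → (1/2)^+} (2r − 1)·W_r ≥ 1. -/
/-!
For `x ≥ A` one has `1 + x ≤ (1 + A⁻¹) x`, so the integrand `x ^ (1 - r) / (1 + x) ^ (r + 1)` is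
squeezed between `(1 + A⁻¹) ^ (-(r + 1)) x ^ (-2 r)` and `x ^ (-2 r)`, and
`(2 r - 1) ∫_A^∞ x ^ (-2 r) dx = A ^ (1 - 2 r)`. Hence `(2 r - 1) W_r` lies between
`(1 + A⁻¹) ^ (-(r + 1)) A ^ (1 - 2 r)`, which tends to `(1 + A⁻¹) ^ (-3/2)` as `r → 1/2⁺`, and
`r ^ (2 r - 1) ≤ 1`; the upper bound is what keeps the `liminf` from being a junk value.
Letting `A → ∞` gives the claim.
-/

open Set Filter MeasureTheory Real Topology

section RpowKernel

variable {a b c x : ℝ}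

lemma rpow_div_one_add_rpow_le (hb : 0 ≤ b) (hx : 0 < x) :
    x ^ a / (1 + x) ^ b ≤ x ^ (a - b) := by
  rw [rpow_sub hx]
  gcongr
  linarith

lemma one_add_inv_rpow_neg_mul_rpow_le {A : ℝ} (hb : 0 ≤ b) (hA : 0 < A) (hAx : A ≤ x) :
    (1 + A⁻¹) ^ (-b) * x ^ (a - b) ≤ x ^ a / (1 + x) ^ b := by
  have hx : 0 < x := hA.trans_le hAx
  have hle : 1 + x ≤ (1 + A⁻¹) * x := by
    have : 1 ≤ A⁻¹ * x := by rwa [← div_eq_inv_mul, one_le_div hA]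
    linarith
  calc (1 + A⁻¹) ^ (-b) * x ^ (a - b) = x ^ a / ((1 + A⁻¹) * x) ^ b := by
        rw [rpow_neg (by positivity), rpow_sub hx, mul_rpow (by positivity) hx.le]
        field_simp
    _ ≤ x ^ a / (1 + x) ^ b := by gcongr

lemma integrableOn_rpow_div_one_add_rpow (hab : a - b < -1) (hb : 0 ≤ b) (hc : 0 < c) :
    IntegrableOn (fun x ↦ x ^ a / (1 + x) ^ b) (Ioi c) := by
  refine (integrableOn_Ioi_rpow_of_lt hab hc).mono'
    (by fun_prop : Measurable fun x : ℝ ↦ x ^ a / (1 + x) ^ b).aestronglyMeasurable ?_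
  filter_upwards [ae_restrict_mem measurableSet_Ioi] with x hx
  have hx0 : 0 < x := hc.trans hx
  rw [norm_of_nonneg (by positivity)]
  exact rpow_div_one_add_rpow_le hb hx0

lemma neg_add_one_mul_integral_Ioi_rpow {s : ℝ} (hs : s < -1) (hc : 0 < c) :
    -(s + 1) * ∫ x in Ioi c, x ^ s = c ^ (s + 1) := by
  have : s + 1 ≠ 0 := by linarith
  rw [integral_Ioi_rpow_of_lt hs hc]
  field_simp

lemma neg_mul_integral_rpow_div_one_add_rpow_le (hab : a - b < -1) (hb : 0 ≤ b) (hc : 0 < c) :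
    -(a - b + 1) * ∫ x in Ioi c, x ^ a / (1 + x) ^ b ≤ c ^ (a - b + 1) := by
  rw [← neg_add_one_mul_integral_Ioi_rpow hab hc]
  refine mul_le_mul_of_nonneg_left ?_ (by linarith)
  exact setIntegral_mono_on (integrableOn_rpow_div_one_add_rpow hab hb hc)
    (integrableOn_Ioi_rpow_of_lt hab hc) measurableSet_Ioi
    fun x hx ↦ rpow_div_one_add_rpow_le hb (hc.trans hx)

lemma le_neg_mul_integral_rpow_div_one_add_rpow {A : ℝ} (hab : a - b < -1) (hb : 0 ≤ b)
    (hc : 0 < c) (hcA : c ≤ A) :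
    (1 + A⁻¹) ^ (-b) * A ^ (a - b + 1) ≤ -(a - b + 1) * ∫ x in Ioi c, x ^ a / (1 + x) ^ b := by
  have hA : 0 < A := hc.trans_le hcA
  have hf := integrableOn_rpow_div_one_add_rpow hab hb hc
  have hmono_integrand : ∫ x in Ioi A, (1 + A⁻¹) ^ (-b) * x ^ (a - b) ≤
      ∫ x in Ioi A, x ^ a / (1 + x) ^ b :=
    setIntegral_mono_on ((integrableOn_Ioi_rpow_of_lt hab hA).const_mul _)
      (hf.mono_set (Ioi_subset_Ioi hcA)) measurableSet_Ioi
      fun x hx ↦ one_add_inv_rpow_neg_mul_rpow_le hb hA (le_of_lt hx)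
  have hmono_domain : ∫ x in Ioi A, x ^ a / (1 + x) ^ b ≤ ∫ x in Ioi c, x ^ a / (1 + x) ^ b := by
    refine setIntegral_mono_set hf ?_ (Ioi_subset_Ioi hcA).eventuallyLE
    filter_upwards [ae_restrict_mem measurableSet_Ioi] with x hx
    have hx0 : 0 < x := hc.trans hx
    positivity
  calc (1 + A⁻¹) ^ (-b) * A ^ (a - b + 1)
      = -(a - b + 1) * ∫ x in Ioi A, (1 + A⁻¹) ^ (-b) * x ^ (a - b) := by
        rw [integral_const_mul, mul_left_comm, neg_add_one_mul_integral_Ioi_rpow hab hA]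
    _ ≤ -(a - b + 1) * ∫ x in Ioi c, x ^ a / (1 + x) ^ b := by
        gcongr
        · linarith
        · exact hmono_integrand.trans hmono_domain

end RpowKernel

noncomputable def W (r : ℝ) : ℝ := ∫ x in Ioi (1 / r), x ^ (1 - r) / (1 + x) ^ (r + 1)

section W

variable {r : ℝ}

lemma W_exponent (r : ℝ) : 2 * r - 1 = -((1 - r) - (r + 1) + 1) := by ring

lemma two_mul_sub_one_mul_W_le_one (hr : r ∈ Ioo (1 / 2 : ℝ) 1) : (2 * r - 1) * W r ≤ 1 := by
  obtain ⟨hr₁, hr₂⟩ := hr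
  calc (2 * r - 1) * W r ≤ (1 / r) ^ ((1 - r) - (r + 1) + 1) := by
        rw [W_exponent]
        exact neg_mul_integral_rpow_div_one_add_rpow_le (by linarith) (by linarith)
          (by positivity)
    _ ≤ 1 := rpow_le_one_of_one_le_of_nonpos (by rw [le_div_iff₀ (by linarith)]; linarith)
        (by linarith)

lemma le_two_mul_sub_one_mul_W {A : ℝ} (hA : 2 ≤ A) (hr : r ∈ Ioo (1 / 2 : ℝ) 1) :
    (1 + A⁻¹) ^ (-(r + 1)) * A ^ ((1 - r) - (r + 1) + 1) ≤ (2 * r - 1) * W r := by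
  obtain ⟨hr₁, hr₂⟩ := hr
  have hcA : 1 / r ≤ A := by
    rw [div_le_iff₀ (by linarith)]
    nlinarith
  rw [W_exponent]
  exact le_neg_mul_integral_rpow_div_one_add_rpow (by linarith) (by linarith) (by positivity) hcA

end W

/-- From the proof of Corollary 2.3: with W_r = ∫_{1/r}^∞ x^{1−r}/(1+x)^{r+1} dx,
liminf_{r → (1/2)^+} (2r − 1)·W_r ≥ 1. -/
theorem stmt_9 :
    (1 : ℝ) ≤ Filter.liminf
      (fun r : ℝ => (2 * r - 1) *
        ∫ x in Set.Ioi (1 / r), x ^ (1 - r) / (1 + x) ^ (r + 1))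
      (nhdsWithin (1 / 2 : ℝ) (Set.Ioi (1 / 2))) := by
  change 1 ≤ liminf (fun r ↦ (2 * r - 1) * W r) (𝓝[>] (1 / 2))
  have hIoo : Ioo (1 / 2 : ℝ) 1 ∈ 𝓝[>] (1 / 2) := Ioo_mem_nhdsGT (by norm_num)
  have hcobdd : IsCoboundedUnder (· ≥ ·) (𝓝[>] (1 / 2)) fun r ↦ (2 * r - 1) * W r :=
    IsBoundedUnder.isCoboundedUnder_ge
      ⟨1, eventually_map.2 (mem_of_superset hIoo fun _ ↦ two_mul_sub_one_mul_W_le_one)⟩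
  have hlower : ∀ A, 2 ≤ A →
      (1 + A⁻¹) ^ (-(3 / 2) : ℝ) ≤ liminf (fun r ↦ (2 * r - 1) * W r) (𝓝[>] (1 / 2)) := by
    intro A hA
    have hlim : Tendsto (fun r : ℝ ↦ (1 + A⁻¹) ^ (-(r + 1)) * A ^ ((1 - r) - (r + 1) + 1))
        (𝓝[>] (1 / 2)) (𝓝 ((1 + A⁻¹) ^ (-(3 / 2) : ℝ))) := by
      have hcont : Continuous fun r : ℝ ↦ (1 + A⁻¹) ^ (-(r + 1)) * A ^ ((1 - r) - (r + 1) + 1) := by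
        fun_prop (disch := positivity)
      convert hcont.continuousWithinAt.tendsto using 2
      norm_num
    rw [← hlim.liminf_eq]
    exact liminf_le_liminf (mem_of_superset hIoo fun _ ↦ le_two_mul_sub_one_mul_W hA)
      hlim.isBoundedUnder_ge hcobdd
  have htail : Tendsto (fun A : ℝ ↦ (1 + A⁻¹) ^ (-(3 / 2) : ℝ)) atTop (𝓝 1) := by
    have h := ((tendsto_inv_atTop_zero (𝕜 := ℝ)).const_add 1).rpow_const
      (p := -(3 / 2)) (Or.inl (by norm_num))
    simpa using h
  exact le_of_tendsto htail ((eventually_ge_atTop (2 : ℝ)).mono hlower)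
end

section
/- Let n ≥ 2 be an integer, c ≥ 1 a real number, and x_1, …, x_n positive real numbers. Then Σ_{i=1}^n x_i + c·Σ_{1 ≤ i < j ≤ n} min(x_i, x_j) ≤ ( c − 2(c−1)/(n+1) ) · ( Σ_{i=1}^n x_i + Σ_{1 ≤ i < j ≤ n} min(x_i, x_j) ). -/
open Finset

section PairSums

variable {ι M : Type*} [Fintype ι] [LinearOrder ι] [AddCommMonoid M]

theorem sum_filter_lt_add_sum_filter_gt_add_sum (f : ι → M) :
    ∑ p : ι × ι with p.1 < p.2, f p.1 + ∑ p : ι × ι with p.2 < p.1, f p.1 + ∑ i, f i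
      = Fintype.card ι • ∑ i, f i := by
  have hdiag : ∑ i, f i = ∑ p : ι × ι with p.1 = p.2, f p.1 := by
    simp [sum_filter, Fintype.sum_prod_type]
  have hall : Fintype.card ι • ∑ i, f i = ∑ p : ι × ι, f p.1 := by
    simp [Fintype.sum_prod_type, sum_const, smul_sum]
  rw [hall, hdiag, sum_filter, sum_filter, sum_filter, ← sum_add_distrib, ← sum_add_distrib]
  refine sum_congr rfl fun p _ => ?_
  rcases lt_trichotomy p.1 p.2 with h | h | h
  · simp [h, h.ne, h.not_gt]
  · simp [h]
  · simp [h, h.ne', h.not_gt]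

theorem sum_filter_lt_add_add_sum (f : ι → M) :
    ∑ p : ι × ι with p.1 < p.2, (f p.1 + f p.2) + ∑ i, f i = Fintype.card ι • ∑ i, f i := by
  have hswap : ∑ p : ι × ι with p.1 < p.2, f p.2 = ∑ p : ι × ι with p.2 < p.1, f p.1 :=
    sum_equiv (Equiv.prodComm ι ι) (by simp) (by simp)
  rw [sum_add_distrib, hswap, sum_filter_lt_add_sum_filter_gt_add_sum]

theorem two_nsmul_sum_filter_lt_min_add_sum_le {R : Type*} [AddCommMonoid R] [LinearOrder R]
    [IsOrderedAddMonoid R] (x : ι → R) :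
    2 • ∑ p : ι × ι with p.1 < p.2, min (x p.1) (x p.2) + ∑ i, x i
      ≤ Fintype.card ι • ∑ i, x i := by
  rw [← sum_filter_lt_add_add_sum, smul_sum]
  gcongr with p
  rw [two_nsmul]
  exact add_le_add (min_le_left _ _) (min_le_right _ _)

end PairSums

/- The difference of the two sides is `(c - 1) * ((n + 1) * S - 2 * (S + M)) / (n + 1)`. -/
theorem add_mul_le_ratio_mul {n c S M : ℝ} (hc : 1 ≤ c) (hn : 0 < n + 1)
    (hM : 2 * M + S ≤ n * S) :
    S + c * M ≤ (c - 2 * (c - 1) / (n + 1)) * (S + M) := by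
  have key : 2 * (c - 1) / (n + 1) * (S + M) ≤ (c - 1) * S := by
    rw [div_mul_eq_mul_div, div_le_iff₀ hn]
    nlinarith
  linarith

theorem stmt_10_general (n : ℕ) (c : ℝ) (hc : 1 ≤ c)
    (x : Fin n → ℝ) :
    (∑ i, x i) + c * ∑ p ∈ Finset.univ.filter (fun p : Fin n × Fin n => p.1 < p.2),
        min (x p.1) (x p.2)
      ≤ (c - 2 * (c - 1) / ((n : ℝ) + 1)) *
          ((∑ i, x i) + ∑ p ∈ Finset.univ.filter (fun p : Fin n × Fin n => p.1 < p.2),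
            min (x p.1) (x p.2)) := by
  have hpairs := two_nsmul_sum_filter_lt_min_add_sum_le x
  rw [Fintype.card_fin, nsmul_eq_mul, nsmul_eq_mul, Nat.cast_ofNat] at hpairs
  exact add_mul_le_ratio_mul hc (by positivity) hpairs

/-- Ratio computation from Theorem 4.1: for n ≥ 2, c ≥ 1 and positive job sizes,
Σ_i x_i + c·Σ_{i<j} min(x_i,x_j)
  ≤ (c − 2(c−1)/(n+1))·(Σ_i x_i + Σ_{i<j} min(x_i,x_j)). -/
theorem stmt_10 (n : ℕ) (hn : 2 ≤ n) (c : ℝ) (hc : 1 ≤ c)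
    (x : Fin n → ℝ) (hx : ∀ i, 0 < x i) :
    (∑ i, x i) + c * ∑ p ∈ Finset.univ.filter (fun p : Fin n × Fin n => p.1 < p.2),
        min (x p.1) (x p.2)
      ≤ (c - 2 * (c - 1) / ((n : ℝ) + 1)) *
          ((∑ i, x i) + ∑ p ∈ Finset.univ.filter (fun p : Fin n × Fin n => p.1 < p.2),
            min (x p.1) (x p.2)) :=
  stmt_10_general n c hc x
end

section
/- Let ρ ∈ (0,1] and s > 0, and define h : (0,∞) → ℝ by h(t) = t·(1 − e^{−((s/t) − 1)/ρ}) for 0 < t < s and h(t) = 0 for t ≥ s. Then h is (1/ρ)-Lipschitz, i.e., |h(t_1) − h(t_2)| ≤ (1/ρ)·|t_1 − t_2| for all t_1, t_2 > 0. -/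
/-- Lipschitz bound from Lemma 4.4: for ρ ∈ (0,1] and s > 0, the function
h(t) = t·(1 − e^{−((s/t)−1)/ρ}) for 0 < t < s and h(t) = 0 for t ≥ s is
(1/ρ)-Lipschitz on (0,∞). -/
theorem stmt_14 (ρ : ℝ) (hρ : ρ ∈ Set.Ioc (0 : ℝ) 1) (s : ℝ) (hs : 0 < s)
    (h : ℝ → ℝ)
    (hdef : ∀ t : ℝ, 0 < t →
      h t = if t < s then t * (1 - Real.exp (-((s / t) - 1) / ρ)) else 0)
    (t₁ t₂ : ℝ) (ht₁ : 0 < t₁) (ht₂ : 0 < t₂) :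
    |h t₁ - h t₂| ≤ (1 / ρ) * |t₁ - t₂| := by
  obtain ⟨hρ0, hρ1⟩ := hρ
  set g : ℝ → ℝ := fun t => t * (1 - Real.exp (-((s / t) - 1) / ρ)) with hgdef
  have hgs : g s = 0 := by simp [hgdef, div_self hs.ne']
  have hhg : ∀ t ∈ Set.Ioc (0:ℝ) s, h t = g t := by
    intro t ht
    rcases eq_or_lt_of_le ht.2 with rfl | hlt
    · rw [hdef t ht.1, if_neg (lt_irrefl t)]; exact hgs.symm
    · rw [hdef t ht.1, if_pos hlt]
  have key : ∀ a ∈ Set.Ioc (0:ℝ) s, ∀ b ∈ Set.Ioc (0:ℝ) s,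
      |g b - g a| ≤ (1/ρ) * |b - a| := by
    intro a ha b hb
    have main := Convex.norm_image_sub_le_of_norm_hasDerivWithin_le (f := g)
      (f' := fun t => 1 - Real.exp (-((s / t) - 1) / ρ) * (1 + s / (ρ * t)))
      (s := Set.Ioc 0 s) (C := 1/ρ) ?_ ?_ (convex_Ioc 0 s) ha hb
    · simpa [Real.norm_eq_abs] using main
    · intro t ht
      have ht0 : t ≠ 0 := ht.1.ne'
      have hinv : HasDerivAt (fun t : ℝ => s / t) (-(s / t^2)) t := by
        simpa [div_eq_mul_inv, mul_comm, neg_mul, mul_neg] using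
          (hasDerivAt_inv ht0).const_mul s
      have h1 : HasDerivAt (fun t : ℝ => -((s / t) - 1) / ρ) (s / t^2 / ρ) t := by
        have := ((hinv.sub_const 1).neg).div_const ρ
        simpa using this
      have h2 := h1.exp
      have h3 : HasDerivAt g
          (1 * (1 - Real.exp (-((s/t)-1)/ρ)) +
            t * (0 - Real.exp (-((s/t)-1)/ρ) * (s / t^2 / ρ))) t :=
        (hasDerivAt_id t).mul ((hasDerivAt_const t 1).sub h2)
      have heq : 1 * (1 - Real.exp (-((s/t)-1)/ρ)) +
            t * (0 - Real.exp (-((s/t)-1)/ρ) * (s / t^2 / ρ)) =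
          1 - Real.exp (-((s / t) - 1) / ρ) * (1 + s / (ρ * t)) := by
        field_simp
        ring
      exact (heq ▸ h3).hasDerivWithinAt
    · intro t ht
      have ht0 : (0:ℝ) < t := ht.1
      have hx : 1 ≤ s / t := (one_le_div ht0).2 ht.2
      set x := s / t with hxdef
      clear_value x
      have hE : Real.exp (-(x - 1) / ρ) * Real.exp ((x - 1) / ρ) = 1 := by
        rw [← Real.exp_add]
        ring_nf
        exact Real.exp_zero
      have hA : 1 + (x - 1) / ρ ≤ Real.exp ((x - 1) / ρ) := by
        have := Real.add_one_le_exp ((x - 1) / ρ)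
        linarith
      have hEpos : 0 < Real.exp (-(x - 1) / ρ) := Real.exp_pos _
      have hE1 : Real.exp (-(x - 1) / ρ) ≤ 1 := by
        have h0 : (0:ℝ) ≤ (x - 1) / ρ := div_nonneg (by linarith) hρ0.le
        have : -(x - 1) / ρ ≤ 0 := by rw [neg_div]; linarith
        calc Real.exp (-(x - 1) / ρ) ≤ Real.exp 0 := Real.exp_le_exp.2 this
          _ = 1 := Real.exp_zero
      have hst : s / (ρ * t) = x / ρ := by
        rw [hxdef, div_div, mul_comm ρ t]
      have hmul : Real.exp (-(x - 1) / ρ) * (1 + (x - 1) / ρ) ≤ 1 := by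
        calc Real.exp (-(x - 1) / ρ) * (1 + (x - 1) / ρ)
            ≤ Real.exp (-(x - 1) / ρ) * Real.exp ((x - 1) / ρ) :=
              mul_le_mul_of_nonneg_left hA hEpos.le
          _ = 1 := hE
      have hρinv : (1:ℝ) ≤ 1 / ρ := by
        rw [le_div_iff₀ hρ0]; linarith
      have hshape : (fun t => 1 - Real.exp (-((s / t) - 1) / ρ) * (1 + s / (ρ * t))) t
          = 1 - Real.exp (-(x - 1) / ρ) * (1 + x / ρ) := by
        simp only
        rw [hst, ← hxdef]
      rw [Real.norm_eq_abs, hst, abs_le]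
      have hxρ : (0:ℝ) ≤ 1 + x / ρ := by positivity
      have hEρ : Real.exp (-(x - 1) / ρ) * ρ⁻¹ ≤ 1 * ρ⁻¹ :=
        mul_le_mul_of_nonneg_right hE1 (inv_nonneg.2 hρ0.le)
      constructor
      · have hid : Real.exp (-(x - 1) / ρ) * (1 + x / ρ)
            = Real.exp (-(x - 1) / ρ) * (1 + (x - 1) / ρ)
              + Real.exp (-(x - 1) / ρ) * ρ⁻¹ := by
          field_simp
          ring
        have : Real.exp (-(x - 1) / ρ) * (1 + x / ρ) ≤ 1 + ρ⁻¹ := by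
          rw [hid]; linarith
        have hinv : (1:ℝ) / ρ = ρ⁻¹ := one_div ρ
        linarith
      · nlinarith [mul_nonneg hEpos.le hxρ, hρinv]
  have hmem_s : s ∈ Set.Ioc (0:ℝ) s := ⟨hs, le_refl s⟩
  rcases le_or_gt t₁ s with h1 | h1 <;> rcases le_or_gt t₂ s with h2 | h2
  · rw [hhg t₁ ⟨ht₁, h1⟩, hhg t₂ ⟨ht₂, h2⟩]
    exact key t₂ ⟨ht₂, h2⟩ t₁ ⟨ht₁, h1⟩
  · have hz : h t₂ = 0 := by rw [hdef t₂ ht₂, if_neg (not_lt.2 h2.le)]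
    rw [hz, hhg t₁ ⟨ht₁, h1⟩, ← hgs]
    calc |g t₁ - g s| ≤ (1/ρ) * |t₁ - s| := key s hmem_s t₁ ⟨ht₁, h1⟩
      _ ≤ (1/ρ) * |t₁ - t₂| := by
          apply mul_le_mul_of_nonneg_left _ (by positivity)
          rw [abs_of_nonpos (by linarith), abs_of_nonpos (by linarith)]
          linarith
  · have hz : h t₁ = 0 := by rw [hdef t₁ ht₁, if_neg (not_lt.2 h1.le)]
    rw [hz, hhg t₂ ⟨ht₂, h2⟩, ← hgs]
    calc |g s - g t₂| ≤ (1/ρ) * |s - t₂| := key t₂ ⟨ht₂, h2⟩ s hmem_s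
      _ ≤ (1/ρ) * |t₁ - t₂| := by
          apply mul_le_mul_of_nonneg_left _ (by positivity)
          rw [abs_of_nonneg (by linarith), abs_of_nonneg (by linarith)]
          linarith
  · have hz1 : h t₁ = 0 := by rw [hdef t₁ ht₁, if_neg (not_lt.2 h1.le)]
    have hz2 : h t₂ = 0 := by rw [hdef t₂ ht₂, if_neg (not_lt.2 h2.le)]
    rw [hz1, hz2, sub_zero, abs_zero]
    positivity
end

section
/- Let β, γ ≥ 0 and let g : (0,∞) → ℝ satisfy g(s) ≤ β·s for all s ∈ (0,1] and g(s) ≤ γ − s for all s ≥ 1. Then for all positive reals a, b: ( b + a·g(b/a) ) + ( a + b·g(a/b) ) ≤ (1 + β + γ)·min(a, b). -/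
section PairingBound

variable {K : Type*} [Field K] [LinearOrder K] [IsStrictOrderedRing K] {g : K → K} {a b : K}

theorem mul_apply_div_le_of_le {β : K} (hg : ∀ s, 0 < s → s ≤ 1 → g s ≤ β * s)
    (hb : 0 < b) (hba : b ≤ a) : a * g (b / a) ≤ β * b := by
  have ha : 0 < a := hb.trans_le hba
  calc a * g (b / a) ≤ a * (β * (b / a)) :=
        mul_le_mul_of_nonneg_left (hg _ (div_pos hb ha) ((div_le_one ha).2 hba)) ha.le
    _ = β * b := by field_simp

theorem mul_apply_div_le_of_ge {γ : K} (hg : ∀ s, 1 ≤ s → g s ≤ γ - s)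
    (hb : 0 < b) (hba : b ≤ a) : b * g (a / b) ≤ γ * b - a := by
  calc b * g (a / b) ≤ b * (γ - a / b) :=
        mul_le_mul_of_nonneg_left (hg _ ((one_le_div hb).2 hba)) hb.le
    _ = γ * b - a := by field_simp

theorem pair_delay_le_of_le {β γ : K} (hg1 : ∀ s, 0 < s → s ≤ 1 → g s ≤ β * s)
    (hg2 : ∀ s, 1 ≤ s → g s ≤ γ - s) (hb : 0 < b) (hba : b ≤ a) :
    (b + a * g (b / a)) + (a + b * g (a / b)) ≤ (1 + β + γ) * b := by
  linarith [mul_apply_div_le_of_le hg1 hb hba, mul_apply_div_le_of_ge hg2 hb hba]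

end PairingBound

theorem stmt_15_general (β γ : ℝ) (g : ℝ → ℝ)
    (hg1 : ∀ s : ℝ, 0 < s → s ≤ 1 → g s ≤ β * s)
    (hg2 : ∀ s : ℝ, 1 ≤ s → g s ≤ γ - s)
    (a b : ℝ) (ha : 0 < a) (hb : 0 < b) :
    (b + a * g (b / a)) + (a + b * g (a / b)) ≤ (1 + β + γ) * min a b := by
  rcases le_total b a with hba | hab
  · simpa only [min_eq_right hba] using pair_delay_le_of_le hg1 hg2 hb hba
  · rw [min_eq_left hab, add_comm]
    exact pair_delay_le_of_le hg1 hg2 ha hab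

/-- Pairing bound from Lemma 4.3: if g(s) ≤ β·s on (0,1] and g(s) ≤ γ − s on
[1,∞), then (b + a·g(b/a)) + (a + b·g(a/b)) ≤ (1 + β + γ)·min(a,b) for all
positive a, b. -/
theorem stmt_15 (β γ : ℝ) (hβ : 0 ≤ β) (hγ : 0 ≤ γ) (g : ℝ → ℝ)
    (hg1 : ∀ s : ℝ, 0 < s → s ≤ 1 → g s ≤ β * s)
    (hg2 : ∀ s : ℝ, 1 ≤ s → g s ≤ γ - s)
    (a b : ℝ) (ha : 0 < a) (hb : 0 < b) :
    (b + a * g (b / a)) + (a + b * g (a / b)) ≤ (1 + β + γ) * min a b :=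
  stmt_15_general β γ g hg1 hg2 a b ha hb
end

section
/- Let φ : [0,∞) → (0,∞) be continuously differentiable and increasing. Then ∫_0^∞ ( ∫_0^x dt/φ(t) + x/φ(x) ) · ( φ′(x)/φ(x)² ) dx ≤ 2 · ∫_0^∞ dt/φ(t)², where both sides are interpreted in [0,∞]. -/
open MeasureTheory

/-- Finiteness bound from Lemma A.3: for φ continuously differentiable, positive
and increasing on [0,∞),
∫_0^∞ ( ∫_0^x dt/φ(t) + x/φ(x) )·( φ′(x)/φ(x)² ) dx ≤ 2·∫_0^∞ dt/φ(t)²,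
both sides interpreted in [0,∞]. -/
theorem stmt_16 (φ φ' : ℝ → ℝ)
    (hpos : ∀ t, 0 ≤ t → 0 < φ t)
    (hderiv : ∀ t, 0 ≤ t → HasDerivAt φ (φ' t) t)
    (hcont : ContinuousOn φ' (Set.Ici 0))
    (hmono : StrictMonoOn φ (Set.Ici 0)) :
    ∫⁻ x in Set.Ioi (0 : ℝ),
        ENNReal.ofReal (((∫ t in (0 : ℝ)..x, 1 / φ t) + x / φ x) * (φ' x / (φ x) ^ 2))
      ≤ 2 * ∫⁻ t in Set.Ioi (0 : ℝ), ENNReal.ofReal (1 / (φ t) ^ 2) := by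
  have hφc : ∀ t, (0:ℝ) ≤ t → ContinuousAt φ t := fun t ht => (hderiv t ht).continuousAt
  have hinvc : ∀ t, (0:ℝ) ≤ t → ContinuousAt (fun s => 1 / φ s) t := fun t ht =>
    ContinuousAt.div continuousAt_const (hφc t ht) (hpos t ht).ne'
  -- nonnegativity of φ'
  have hφ'nn : ∀ x, (0:ℝ) ≤ x → 0 ≤ φ' x := by
    intro x hx
    have h := (hderiv x hx).hasDerivWithinAt (s := Set.Ioi x)
    rw [hasDerivWithinAt_iff_tendsto_slope' (Set.notMem_Ioi.2 le_rfl)] at h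
    refine ge_of_tendsto h (eventually_nhdsWithin_of_forall ?_)
    intro y hy
    have hxy : x < y := hy
    have hy0 : (0:ℝ) ≤ y := hx.trans hxy.le
    have : 0 ≤ slope φ x y := by
      rw [slope_def_field]
      exact div_nonneg (sub_nonneg.2 (hmono hx hy0 hxy).le) (sub_nonneg.2 hxy.le)
    exact this
  set F : ℝ → ℝ := fun x => ∫ t in (0:ℝ)..x, 1 / φ t with hF
  set g : ℝ → ℝ := fun x => (F x + x / φ x) * (φ' x / (φ x) ^ 2) with hg
  -- main bound on each Ioc 0 R
  have main : ∀ R : ℝ, ∫⁻ x in Set.Ioc 0 R, ENNReal.ofReal (g x)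
      ≤ 2 * ∫⁻ t in Set.Ioi (0:ℝ), ENNReal.ofReal (1 / (φ t) ^ 2) := by
    intro R
    rcases le_or_gt R 0 with hR | hR
    · rw [Set.Ioc_eq_empty (by simpa using hR)]
      simp
    have hφcont : ContinuousOn φ (Set.Icc 0 R) := fun x hx => (hφc x hx.1).continuousWithinAt
    have hinvcont : ContinuousOn (fun t => 1 / φ t) (Set.Icc 0 R) := fun x hx =>
      (hinvc x hx.1).continuousWithinAt
    have hIccsub : Set.Icc (0:ℝ) R ⊆ Set.Ici 0 := fun x hx => hx.1
    have hφ'cont : ContinuousOn φ' (Set.Icc 0 R) := hcont.mono hIccsub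
    have hφne : ∀ x ∈ Set.Icc (0:ℝ) R, φ x ≠ 0 := fun x hx => (hpos x hx.1).ne'
    have hinvint : ∀ x ∈ Set.Icc (0:ℝ) R, IntervalIntegrable (fun t => 1 / φ t) volume 0 x := by
      intro x hx
      apply ContinuousOn.intervalIntegrable
      apply hinvcont.mono
      rw [Set.uIcc_of_le hx.1]
      exact Set.Icc_subset_Icc le_rfl hx.2
    have hFcont : ContinuousOn F (Set.Icc 0 R) := by
      have := intervalIntegral.continuousOn_primitive_interval (μ := volume)
        (f := fun t => 1 / φ t) (a := (0:ℝ)) (b := R)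
        (by rw [Set.uIcc_of_le hR.le]; exact hinvcont.integrableOn_compact isCompact_Icc)
      rwa [Set.uIcc_of_le hR.le] at this
    -- F is nonneg and dominates x/φ x on [0,R]
    have hFnn : ∀ x ∈ Set.Icc (0:ℝ) R, 0 ≤ F x := by
      intro x hx
      apply intervalIntegral.integral_nonneg hx.1
      intro t ht
      have := hpos t ht.1
      positivity
    have hFge : ∀ x ∈ Set.Icc (0:ℝ) R, x / φ x ≤ F x := by
      intro x hx
      have hconst : ∫ t in (0:ℝ)..x, 1 / φ x = x / φ x := by
        simp [div_eq_mul_inv, mul_comm]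
      rw [← hconst]
      apply intervalIntegral.integral_mono_on hx.1 (by
        apply intervalIntegrable_const) (hinvint x hx)
      intro t ht
      apply one_div_le_one_div_of_le (hpos t ht.1)
      exact hmono.monotoneOn ht.1 hx.1 ht.2
    -- derivative of F at interior points
    have hFderiv : ∀ x ∈ Set.Ioo (0:ℝ) R, HasDerivAt F (1 / φ x) x := by
      intro x hx
      apply intervalIntegral.integral_hasDerivAt_right (hinvint x ⟨hx.1.le, hx.2.le⟩)
      · exact ContinuousAt.stronglyMeasurableAtFilter isOpen_Ioi
          (fun y hy => hinvc y (le_of_lt hy)) x hx.1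
      · exact hinvc x hx.1.le
    -- derivative of H = F/φ
    set H : ℝ → ℝ := fun x => F x / φ x with hH
    have hHderiv : ∀ x ∈ Set.Ioo (0:ℝ) R,
        HasDerivAt H (1 / (φ x) ^ 2 - F x * φ' x / (φ x) ^ 2) x := by
      intro x hx
      have h1 := (hFderiv x hx).div (hderiv x hx.1.le) (hpos x hx.1.le).ne'
      have hne : φ x ≠ 0 := (hpos x hx.1.le).ne'
      have heq : (1 / φ x * φ x - F x * φ' x) / φ x ^ 2
          = 1 / (φ x) ^ 2 - F x * φ' x / (φ x) ^ 2 := by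
        rw [one_div, inv_mul_cancel₀ hne, sub_div, one_div]
      rw [← heq]
      exact h1
    have hHcont : ContinuousOn H (Set.Icc 0 R) := hFcont.div hφcont hφne
    -- the integrand fun x => 1/φ x^2 - F x * φ' x / φ x ^2 is continuous on [0,R]
    have hcont2 : ContinuousOn (fun x => 1 / (φ x) ^ 2 - F x * φ' x / (φ x) ^ 2)
        (Set.Icc 0 R) := by
      apply ContinuousOn.sub
      · exact ContinuousOn.div continuousOn_const (hφcont.pow 2)
          (fun x hx => pow_ne_zero _ (hφne x hx))
      · exact ContinuousOn.div (hFcont.mul hφ'cont) (hφcont.pow 2)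
          (fun x hx => pow_ne_zero _ (hφne x hx))
    have hint2 : IntervalIntegrable (fun x => 1 / (φ x) ^ 2 - F x * φ' x / (φ x) ^ 2)
        volume 0 R := by
      apply ContinuousOn.intervalIntegrable
      rwa [Set.uIcc_of_le hR.le]
    -- FTC: ∫_0^R (1/φ² − Fφ'/φ²) = H R − H 0 = H R ≥ 0
    have hFTC : ∫ x in (0:ℝ)..R, (1 / (φ x) ^ 2 - F x * φ' x / (φ x) ^ 2) = H R - H 0 := by
      apply intervalIntegral.integral_eq_sub_of_hasDeriv_right_of_le hR.le hHcont
        (fun x hx => (hHderiv x hx).hasDerivWithinAt) hint2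
    have hH0 : H 0 = 0 := by simp [hH, hF]
    have hHRnn : 0 ≤ H R := div_nonneg (hFnn R ⟨hR.le, le_rfl⟩) (hpos R hR.le).le
    -- continuity/integrability of remaining integrands on [0,R]
    have hgcont : ContinuousOn g (Set.Icc 0 R) := by
      apply ContinuousOn.mul
      · exact hFcont.add (ContinuousOn.div (continuous_id.continuousOn) hφcont hφne)
      · exact ContinuousOn.div hφ'cont (hφcont.pow 2)
          (fun x hx => pow_ne_zero _ (hφne x hx))
    have hgint : IntervalIntegrable g volume 0 R := by
      apply ContinuousOn.intervalIntegrable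
      rwa [Set.uIcc_of_le hR.le]
    have h2cont : ContinuousOn (fun x => 2 * (F x * φ' x / (φ x) ^ 2)) (Set.Icc 0 R) := by
      apply ContinuousOn.mul continuousOn_const
      exact ContinuousOn.div (hFcont.mul hφ'cont) (hφcont.pow 2)
        (fun x hx => pow_ne_zero _ (hφne x hx))
    have h2int : IntervalIntegrable (fun x => 2 * (F x * φ' x / (φ x) ^ 2)) volume 0 R := by
      apply ContinuousOn.intervalIntegrable
      rwa [Set.uIcc_of_le hR.le]
    have hsqcont : ContinuousOn (fun x => 1 / (φ x) ^ 2) (Set.Icc 0 R) :=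
      ContinuousOn.div continuousOn_const (hφcont.pow 2)
        (fun x hx => pow_ne_zero _ (hφne x hx))
    have hsqint : IntervalIntegrable (fun x => 1 / (φ x) ^ 2) volume 0 R := by
      apply ContinuousOn.intervalIntegrable
      rwa [Set.uIcc_of_le hR.le]
    -- pointwise bound g ≤ 2 Fφ'/φ² on [0,R]
    have hptwise : ∀ x ∈ Set.Icc (0:ℝ) R, g x ≤ 2 * (F x * φ' x / (φ x) ^ 2) := by
      intro x hx
      have h1 : F x + x / φ x ≤ 2 * F x := by
        have := hFge x hx
        linarith
      have h2 : (0:ℝ) ≤ φ' x / (φ x) ^ 2 :=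
        div_nonneg (hφ'nn x hx.1) (sq_nonneg _)
      calc g x = (F x + x / φ x) * (φ' x / (φ x) ^ 2) := rfl
        _ ≤ 2 * F x * (φ' x / (φ x) ^ 2) := mul_le_mul_of_nonneg_right h1 h2
        _ = 2 * (F x * φ' x / (φ x) ^ 2) := by ring
    -- the chain of inequalities
    have hgnn : ∀ x ∈ Set.Icc (0:ℝ) R, 0 ≤ g x := by
      intro x hx
      apply mul_nonneg
      · have h1 := hFnn x hx
        have h2 : 0 ≤ x / φ x := div_nonneg hx.1 (hpos x hx.1).le
        linarith
      · exact div_nonneg (hφ'nn x hx.1) (sq_nonneg _)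
    have hstep1 : ∫ x in (0:ℝ)..R, g x ≤ 2 * ∫ x in (0:ℝ)..R, 1 / (φ x) ^ 2 := by
      have hA : ∫ x in (0:ℝ)..R, g x ≤ ∫ x in (0:ℝ)..R, 2 * (F x * φ' x / (φ x) ^ 2) :=
        intervalIntegral.integral_mono_on hR.le hgint h2int hptwise
      have hB : ∫ x in (0:ℝ)..R, 2 * (F x * φ' x / (φ x) ^ 2)
          = 2 * ((∫ x in (0:ℝ)..R, 1 / (φ x) ^ 2) - H R) := by
        rw [intervalIntegral.integral_const_mul]
        congr 1
        have : ∀ x, F x * φ' x / (φ x) ^ 2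
            = 1 / (φ x) ^ 2 - (1 / (φ x) ^ 2 - F x * φ' x / (φ x) ^ 2) := fun x => by ring
        rw [intervalIntegral.integral_congr (fun x _ => this x),
          intervalIntegral.integral_sub hsqint hint2, hFTC, hH0]
        ring
      calc ∫ x in (0:ℝ)..R, g x ≤ 2 * ((∫ x in (0:ℝ)..R, 1 / (φ x) ^ 2) - H R) :=
            hB ▸ hA
        _ ≤ 2 * ∫ x in (0:ℝ)..R, 1 / (φ x) ^ 2 := by nlinarith [hHRnn]
    -- convert to lintegrals
    have hgIoc : IntegrableOn g (Set.Ioc 0 R) volume := by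
      rw [← intervalIntegrable_iff_integrableOn_Ioc_of_le hR.le]
      exact hgint
    have hl1 : ∫⁻ x in Set.Ioc 0 R, ENNReal.ofReal (g x)
        = ENNReal.ofReal (∫ x in Set.Ioc 0 R, g x) := by
      rw [← ofReal_integral_eq_lintegral_ofReal hgIoc]
      exact (ae_restrict_iff' measurableSet_Ioc).2
        (Filter.Eventually.of_forall (fun x hx => hgnn x ⟨hx.1.le, hx.2⟩))
    have hl2 : ∫ x in Set.Ioc 0 R, g x = ∫ x in (0:ℝ)..R, g x :=
      (intervalIntegral.integral_of_le hR.le).symm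
    have hsqIoc : IntegrableOn (fun x => 1 / (φ x) ^ 2) (Set.Ioc 0 R) volume := by
      rw [← intervalIntegrable_iff_integrableOn_Ioc_of_le hR.le]
      exact hsqint
    have hl3 : ENNReal.ofReal (∫ x in (0:ℝ)..R, 1 / (φ x) ^ 2)
        = ∫⁻ x in Set.Ioc 0 R, ENNReal.ofReal (1 / (φ x) ^ 2) := by
      rw [intervalIntegral.integral_of_le hR.le,
        ofReal_integral_eq_lintegral_ofReal hsqIoc]
      exact Filter.Eventually.of_forall (fun x => by positivity)
    calc ∫⁻ x in Set.Ioc 0 R, ENNReal.ofReal (g x)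
        = ENNReal.ofReal (∫ x in (0:ℝ)..R, g x) := by rw [hl1, hl2]
      _ ≤ ENNReal.ofReal (2 * ∫ x in (0:ℝ)..R, 1 / (φ x) ^ 2) :=
          ENNReal.ofReal_le_ofReal hstep1
      _ = 2 * ENNReal.ofReal (∫ x in (0:ℝ)..R, 1 / (φ x) ^ 2) := by
          rw [ENNReal.ofReal_mul (by norm_num)]
          norm_num
      _ = 2 * ∫⁻ x in Set.Ioc 0 R, ENNReal.ofReal (1 / (φ x) ^ 2) := by rw [hl3]
      _ ≤ 2 * ∫⁻ t in Set.Ioi (0:ℝ), ENNReal.ofReal (1 / (φ t) ^ 2) := by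
          gcongr
          exact Set.Ioc_subset_Ioi_self
  -- take the supremum over R
  have hunion : Set.Ioi (0:ℝ) = ⋃ n : ℕ, Set.Ioc 0 (n:ℝ) := by
    ext x
    simp only [Set.mem_Ioi, Set.mem_iUnion, Set.mem_Ioc]
    constructor
    · intro hx
      obtain ⟨n, hn⟩ := exists_nat_ge x
      exact ⟨n, hx, hn⟩
    · rintro ⟨n, hx, -⟩
      exact hx
  show ∫⁻ x in Set.Ioi (0:ℝ), ENNReal.ofReal (g x)
      ≤ 2 * ∫⁻ t in Set.Ioi (0:ℝ), ENNReal.ofReal (1 / (φ t) ^ 2)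
  calc ∫⁻ x in Set.Ioi (0:ℝ), ENNReal.ofReal (g x)
      = ⨆ n : ℕ, ∫⁻ x in Set.Ioc 0 (n:ℝ), ENNReal.ofReal (g x) := by
        rw [hunion]
        apply setLIntegral_iUnion_of_directed
        exact Monotone.directed_le (fun a b hab =>
          Set.Ioc_subset_Ioc_right (Nat.cast_le.2 hab))
    _ ≤ 2 * ∫⁻ t in Set.Ioi (0:ℝ), ENNReal.ofReal (1 / (φ t) ^ 2) := iSup_le (fun n => main n)
end
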